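/- (Machine-learning based automated mechanism design.) Fix λ ∈ [0, 1] and define the blended objective μ_λ(M) = (1−λ)·R(M) + λ·W(M). Consider n agents with finite type sets T_1, …, T_n and independent uniform type distributions f_i on T_i, a finite outcome set O, and valuations v_i. Let V ∈ ℝ and ε ≥ 0. If M is an ε-EEIC and interim IR mechanism with μ_λ(M) ≥ V − ε, then there exists a BIC and interim IR mechanism M' with μ_λ(M') ≥ V − (1−λ)·(∑_{i=1}^n |T_i|)·ε − ε. -/

import Mathlib

/-!
Fix an agent `i` and write `B s a = v_i(s, X_i(a))`, `P a = P_i(a)` for the interim menu of `M`.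
Averaging the ex-post regret over the other agents' independent uniform types shows that the
interim regrets `r s = max_a (B s a - P a) - (B s s - P s)` sum to at most `|T_i| ε`.

Let `π` maximise `∑ s, B s (π s)` over the permutations of `T_i`, and feed `M` the reports
relabelled by `π`: with independent uniform types agent `i` then faces the allocations
`a ↦ X_i(π a)`, and welfare does not decrease. Optimality of `π` means that the complete digraph on
`T_i` with weights `d s t = B s (π t) - B t (π t)` has no positive cycle, so the longest simple path
`φ s` out of `s` is a potential, and the prices `B s (π s) - φ s` are BIC, IR and nonnegative
(Rochet's cycle-monotonicity argument). Telescoping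
`d s t ≤ (B s s - P s + r s) - (B t (π t) - P (π t))` along these paths bounds `φ`, so the
expected revenue from agent `i` drops by at most `∑ s, r s ≤ |T_i| ε`.
-/

open Finset

namespace Stmt18

variable {n : ℕ} {T : Fin n → Type} {O : Type}

/-- The interim utility `U_i(s, s')` of agent `i` with true type `s` reporting `s'`. -/
noncomputable def interimU [∀ i, Fintype (T i)] [Fintype O]
    (f : ∀ i, T i → ℝ) (v : (i : Fin n) → T i → O → ℝ)
    (x : (∀ i, T i) → O → ℝ) (p : Fin n → (∀ i, T i) → ℝ)
    (i : Fin n) (s s' : T i) : ℝ :=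
  (∑ o, (∑ t : ∀ j, T j, (∏ j, f j (t j)) * x (Function.update t i s') o) * v i s o)
    - ∑ t : ∀ j, T j, (∏ j, f j (t j)) * p i (Function.update t i s')

/-- Ex-post utility `u_i(s, M(t̂))` of agent `i` with true type `s` at report profile `th`. -/
noncomputable def expostU [Fintype O]
    (v : (i : Fin n) → T i → O → ℝ)
    (x : (∀ i, T i) → O → ℝ) (p : Fin n → (∀ i, T i) → ℝ)
    (i : Fin n) (s : T i) (th : ∀ j, T j) : ℝ :=
  (∑ o, x th o * v i s o) - p i th

/-- Expected revenue `R(M)`. -/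
noncomputable def Rev [∀ i, Fintype (T i)]
    (f : ∀ i, T i → ℝ) (p : Fin n → (∀ i, T i) → ℝ) : ℝ :=
  ∑ t : ∀ j, T j, (∏ j, f j (t j)) * ∑ i, p i t

/-- Expected social welfare `W(M)`. -/
noncomputable def Wel [∀ i, Fintype (T i)] [Fintype O]
    (f : ∀ i, T i → ℝ) (v : (i : Fin n) → T i → O → ℝ)
    (x : (∀ i, T i) → O → ℝ) : ℝ :=
  ∑ t : ∀ j, T j, (∏ j, f j (t j)) * ∑ i, ∑ o, x t o * v i (t i) o

end Stmt18

open Function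

namespace Stmt18

section Potential

variable {S : Type*} (d : S → S → ℝ)

def chainSum (l : List S) : ℝ := (List.zipWith d l l.tail).sum

@[simp] lemma chainSum_singleton (a : S) : chainSum d [a] = 0 := rfl

@[simp] lemma chainSum_cons_cons (a b : S) (l : List S) :
    chainSum d (a :: b :: l) = d a b + chainSum d (b :: l) := by
  simp [chainSum]

lemma chainSum_append_cons (l₁ : List S) (a : S) (l₂ : List S) :
    chainSum d (l₁ ++ a :: l₂) = chainSum d (l₁ ++ [a]) + chainSum d (a :: l₂) := by
  induction l₁ with
  | nil => simp
  | cons x l₁ ih =>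
    cases l₁ with
    | nil => simp
    | cons y l₁ =>
      simp only [List.cons_append, chainSum_cons_cons] at ih ⊢
      rw [ih]; ring

lemma chainSum_cycle_eq_sum_formPerm [DecidableEq S] {a : S} {l : List S} (hl : (a :: l).Nodup) :
    chainSum d (a :: l ++ [a]) = ((a :: l).map fun x => d x ((a :: l).formPerm x)).sum := by
  have hrot : l ++ [a] = (a :: l).rotate 1 := by simp
  unfold chainSum
  congr 1
  refine List.ext_getElem (by simp) fun i h₁ h₂ => ?_
  simp only [List.getElem_zipWith, List.getElem_map, List.formPerm_apply_getElem _ hl]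
  congr 1
  · simp only [List.length_map] at h₂
    exact List.getElem_append_left h₂
  · simp only [List.cons_append, List.tail_cons, hrot, List.getElem_rotate]


lemma chainSum_le_of_le_sub {g h : S → ℝ} (hd : ∀ a b, d a b ≤ g a - h b) (hg : ∀ a, 0 ≤ g a)
    (s : S) (l : List S) : chainSum d (s :: l) ≤ h s + ((s :: l).map fun a => g a - h a).sum := by
  induction l generalizing s with
  | nil => simpa using hg s
  | cons t l ih =>
    simp only [chainSum_cons_cons, List.map_cons, List.sum_cons] at ih ⊢
    linarith [hd s t, ih t]

variable [Fintype S] [DecidableEq S]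

lemma chainSum_cycle_nonpos (hd : ∀ s, d s s = 0) (hcyc : ∀ ρ : Equiv.Perm S, ∑ s, d s (ρ s) ≤ 0)
    {a : S} {l : List S} (hl : (a :: l).Nodup) : chainSum d (a :: l ++ [a]) ≤ 0 := by
  rw [chainSum_cycle_eq_sum_formPerm d hl, ← List.sum_toFinset _ hl]
  calc _ = ∑ x, d x ((a :: l).formPerm x) :=
        sum_subset (subset_univ _) fun x _ hx => by
          rw [List.formPerm_apply_of_notMem (by simpa using hx), hd]
    _ ≤ 0 := hcyc _

-- `s :: l` ranges over the simple paths out of `s`, the trivial one included.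
def potential (s : S) : ℝ :=
  (univ.filter fun l : {l : List S // l.Nodup} => s ∉ l.1).sup' ⟨⟨[], List.nodup_nil⟩, by simp⟩
    fun l => chainSum d (s :: l.1)

lemma chainSum_le_potential {s : S} {l : List S} (hl : (s :: l).Nodup) :
    chainSum d (s :: l) ≤ potential d s :=
  le_sup' (fun l : {l : List S // l.Nodup} => chainSum d (s :: l.1))
    (mem_filter.2 ⟨mem_univ ⟨l, hl.of_cons⟩, (List.nodup_cons.1 hl).1⟩)

lemma potential_nonneg (s : S) : 0 ≤ potential d s := by
  simpa using chainSum_le_potential d (List.nodup_singleton s)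

lemma potential_le {s : S} {C : ℝ} (h : ∀ l, (s :: l).Nodup → chainSum d (s :: l) ≤ C) :
    potential d s ≤ C :=
  sup'_le _ _ fun l hl => h l.1 (List.nodup_cons.2 ⟨(mem_filter.1 hl).2, l.2⟩)

lemma exists_chainSum_eq_potential (s : S) :
    ∃ l, (s :: l).Nodup ∧ chainSum d (s :: l) = potential d s := by
  obtain ⟨l, hl, h⟩ := exists_mem_eq_sup' _ fun l : {l : List S // l.Nodup} => chainSum d (s :: l.1)
  exact ⟨l.1, List.nodup_cons.2 ⟨(mem_filter.1 hl).2, l.2⟩, h.symm⟩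

lemma potential_le_add_sum {g h : S → ℝ} (hd : ∀ a b, d a b ≤ g a - h b) (hg : ∀ a, 0 ≤ g a)
    (hgh : ∀ a, h a ≤ g a) (s : S) : potential d s ≤ h s + ∑ a, (g a - h a) :=
  potential_le d fun l hl => (chainSum_le_of_le_sub d hd hg s l).trans <| by
    rw [← List.sum_toFinset _ hl]
    gcongr
    · exact fun a _ _ => sub_nonneg.2 (hgh a)
    · exact subset_univ _

variable {d}

lemma potential_add_le (hd : ∀ s, d s s = 0) (hcyc : ∀ ρ : Equiv.Perm S, ∑ s, d s (ρ s) ≤ 0)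
    (s t : S) : potential d t + d s t ≤ potential d s := by
  obtain ⟨l, hl, hφ⟩ := exists_chainSum_eq_potential d t
  rw [← hφ]
  by_cases hs : s ∈ t :: l
  · rcases List.mem_cons.1 hs with rfl | hsl
    · simp [hd, hφ]
    obtain ⟨l₁, l₂, rfl⟩ := List.append_of_mem hsl
    have hcycle : (s :: t :: l₁).Nodup :=
      (List.perm_append_singleton s (t :: l₁)).nodup_iff.1 (hl.sublist (by simp))
    have hcycle_nonpos := chainSum_cycle_nonpos d hd hcyc hcycle
    have hsplit := chainSum_append_cons d (t :: l₁) s l₂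
    have htail := chainSum_le_potential d (hl.sublist (l₁ := s :: l₂) (by simp))
    simp only [List.cons_append, chainSum_cons_cons] at hcycle_nonpos hsplit ⊢
    linarith
  · simpa [add_comm] using chainSum_le_potential d (List.nodup_cons.2 ⟨hs, hl⟩)

lemma potential_le_of_forall_nonneg_add (hd : ∀ s, d s s = 0)
    (hcyc : ∀ ρ : Equiv.Perm S, ∑ s, d s (ρ s) ≤ 0) {s : S} {C : ℝ} (h : ∀ b, 0 ≤ d b s + C) :
    potential d s ≤ C := by
  refine potential_le d fun l hl => ?_
  rcases l.eq_nil_or_concat' with rfl | ⟨l, b, rfl⟩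
  · simpa [hd] using h s
  have hcycle_nonpos :=
    chainSum_cycle_nonpos d hd hcyc ((List.perm_append_singleton b (s :: l)).nodup_iff.1 hl)
  simp only [List.cons_append, chainSum_cons_cons] at hcycle_nonpos ⊢
  linarith [h b]

end Potential

theorem exists_perm_incentiveCompatible_prices {S : Type*} [Fintype S] (B : S → S → ℝ)
    (P r : S → ℝ) (hB : ∀ s a, 0 ≤ B s a) (hr : ∀ s a, B s a - P a ≤ B s s - P s + r s)
    (hIR : ∀ s, P s ≤ B s s) :
    ∃ (π : Equiv.Perm S) (Q : S → ℝ), (∀ s, 0 ≤ Q s) ∧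
      (∀ s a, B s (π a) - Q a ≤ B s (π s) - Q s) ∧ (∀ s, Q s ≤ B s (π s)) ∧
      ∑ s, B s s ≤ ∑ s, B s (π s) ∧ ∑ s, P s - Fintype.card S * ∑ s, r s ≤ ∑ s, Q s := by
  classical
  obtain ⟨π, -, hπ⟩ :=
    exists_max_image univ (fun ρ : Equiv.Perm S => ∑ s, B s (ρ s)) univ_nonempty
  set d : S → S → ℝ := fun s a => B s (π a) - B a (π a) with hd
  have hd0 : ∀ s, d s s = 0 := fun s => sub_self _
  have hcyc : ∀ ρ : Equiv.Perm S, ∑ s, d s (ρ s) ≤ 0 := fun ρ => by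
    have hπρ := hπ (π * ρ) (mem_univ _)
    simp only [hd, sum_sub_distrib, Equiv.sum_comp ρ fun a => B a (π a)]
    simpa using hπρ
  have hwel : ∑ s, B s s ≤ ∑ s, B s (π s) := by simpa using hπ 1 (mem_univ _)
  refine ⟨π, fun s => B s (π s) - potential d s, fun s => ?_, fun s a => ?_,
    fun s => by linarith [potential_nonneg d s], hwel, ?_⟩
  · linarith [potential_le_of_forall_nonneg_add hd0 hcyc (s := s) (C := B s (π s))
      fun b => by simp [hd, hB]]
  · linarith [potential_add_le hd0 hcyc s a]
  · have hφ := fun s => potential_le_add_sum d (g := fun a => B a a - P a + r a)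
      (h := fun a => B a (π a) - P (π a)) (fun a b => by linarith [hr a (π b)])
      (fun a => by linarith [hr a a, hIR a]) (fun a => by linarith [hr a (π a)]) s
    have hsum := sum_le_sum fun s (_ : s ∈ univ) => hφ s
    have hcard := mul_le_mul_of_nonneg_left hwel (Nat.cast_nonneg (α := ℝ) (Fintype.card S))
    simp only [sum_add_distrib, sum_sub_distrib, sum_const, card_univ, nsmul_eq_mul,
      Equiv.sum_comp π P] at hsum ⊢
    linarith

section Mechanism

variable {n : ℕ} {T : Fin n → Type} [∀ i, Fintype (T i)] {f : ∀ i, T i → ℝ}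

def IsUniform (f : ∀ i, T i → ℝ) : Prop :=
  ∀ i (t : T i), f i t = 1 / (Fintype.card (T i) : ℝ)

lemma sum_sum_update (i : Fin n) (H : (∀ j, T j) → ℝ) :
    ∑ a : T i, ∑ t : ∀ j, T j, H (update t i a) = Fintype.card (T i) * ∑ t, H t := by
  have hinv : Involutive fun q : T i × (∀ j, T j) => (q.2 i, update q.2 i q.1) := by
    rintro ⟨a, t⟩
    simp
  rw [← Fintype.sum_prod_type', ← Equiv.sum_comp hinv.toPerm]
  simp [Fintype.sum_prod_type]

lemma IsUniform.prod_eq (hf : IsUniform f) (t : ∀ j, T j) :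
    ∏ j, f j (t j) = (Fintype.card (∀ j, T j) : ℝ)⁻¹ := by
  simp [fun j => hf j (t j), Fintype.card_pi, prod_inv_distrib]

lemma IsUniform.nonneg (hf : IsUniform f) (i : Fin n) (t : T i) : 0 ≤ f i t := by
  rw [hf]
  positivity

lemma IsUniform.sum_prod_eq_one (hf : IsUniform f) [∀ i, Nonempty (T i)] :
    ∑ t : ∀ j, T j, ∏ j, f j (t j) = 1 := by
  simp only [hf.prod_eq, sum_const, card_univ, nsmul_eq_mul]
  exact mul_inv_cancel₀ (Nat.cast_ne_zero.2 Fintype.card_ne_zero)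

lemma IsUniform.sum_sum_prod_mul_update (hf : IsUniform f) (i : Fin n) (H : (∀ j, T j) → ℝ) :
    ∑ a : T i, ∑ t, (∏ j, f j (t j)) * H (update t i a)
      = Fintype.card (T i) * ∑ t, (∏ j, f j (t j)) * H t := by
  simp only [hf.prod_eq, ← mul_sum, sum_sum_update]
  ring

variable (f) in
noncomputable def interimPayment (p : Fin n → (∀ i, T i) → ℝ) (i : Fin n) (a : T i) : ℝ :=
  ∑ t : ∀ j, T j, (∏ j, f j (t j)) * p i (update t i a)

lemma IsUniform.interimPayment_ownType (hf : IsUniform f) [∀ i, Nonempty (T i)]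
    (Q : ∀ i, T i → ℝ) (i : Fin n) (a : T i) :
    interimPayment f (fun i t => Q i (t i)) i a = Q i a := by
  simp [interimPayment, ← sum_mul, hf.sum_prod_eq_one]

lemma IsUniform.Rev_eq (hf : IsUniform f) [∀ i, Nonempty (T i)] (p : Fin n → (∀ i, T i) → ℝ) :
    Rev f p = ∑ i, (Fintype.card (T i) : ℝ)⁻¹ * ∑ a, interimPayment f p i a := by
  simp only [Rev, interimPayment, hf.sum_sum_prod_mul_update, mul_sum]
  rw [sum_comm]
  field_simp

lemma IsUniform.Rev_le_add (hf : IsUniform f) [∀ i, Nonempty (T i)]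
    {p p' : Fin n → (∀ i, T i) → ℝ} {δ : Fin n → ℝ}
    (h : ∀ i, ∑ a, interimPayment f p i a
      ≤ ∑ a, interimPayment f p' i a + Fintype.card (T i) * δ i) :
    Rev f p ≤ Rev f p' + ∑ i, δ i := by
  rw [hf.Rev_eq, hf.Rev_eq, ← sum_add_distrib]
  gcongr with i
  have hc : (Fintype.card (T i) : ℝ) ≠ 0 := Nat.cast_ne_zero.2 Fintype.card_ne_zero
  calc _ ≤ (Fintype.card (T i) : ℝ)⁻¹
        * (∑ a, interimPayment f p' i a + Fintype.card (T i) * δ i) := by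
        gcongr
        exact h i
    _ = _ := by field_simp

variable {O : Type} [Fintype O] {v : (i : Fin n) → T i → O → ℝ} {x : (∀ i, T i) → O → ℝ}
  {p : Fin n → (∀ i, T i) → ℝ}

-- `interimValue f v x i s a` is `v_i(s, X_i(a))`.
variable (f v x) in
noncomputable def interimValue (i : Fin n) (s a : T i) : ℝ :=
  ∑ o, (∑ t : ∀ j, T j, (∏ j, f j (t j)) * x (update t i a) o) * v i s o

lemma interimU_eq_sub (i : Fin n) (s a : T i) :
    interimU f v x p i s a = interimValue f v x i s a - interimPayment f p i a := rfl

lemma interimU_eq_sum_expostU (i : Fin n) (s a : T i) :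
    interimU f v x p i s a = ∑ t, (∏ j, f j (t j)) * expostU v x p i s (update t i a) := by
  simp only [interimU, expostU, mul_sub, sum_sub_distrib, mul_sum, sum_mul]
  rw [sum_comm]
  simp only [mul_assoc]

lemma interimValue_nonneg (hf : ∀ i t, 0 ≤ f i t) (hv : ∀ i t o, 0 ≤ v i t o)
    (hx : ∀ t o, 0 ≤ x t o) (i : Fin n) (s a : T i) : 0 ≤ interimValue f v x i s a :=
  sum_nonneg fun o _ => mul_nonneg
    (sum_nonneg fun _ _ => mul_nonneg (prod_nonneg fun j _ => hf j _) (hx _ o)) (hv i s o)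

lemma IsUniform.sum_interimRegret_le (hf : IsUniform f) [∀ i, Nonempty (T i)] (i : Fin n) :
    ∑ s, (univ.sup' univ_nonempty (fun a => interimU f v x p i s a) - interimU f v x p i s s)
      ≤ Fintype.card (T i) * ∑ t, (∏ j, f j (t j)) *
        (univ.sup' univ_nonempty (fun a => expostU v x p i (t i) (update t i a))
          - expostU v x p i (t i) t) := by
  rw [← hf.sum_sum_prod_mul_update]
  gcongr with s
  simp only [update_self, update_idem, mul_sub, sum_sub_distrib, interimU_eq_sum_expostU]
  gcongr
  refine sup'_le _ _ fun a _ => ?_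
  gcongr with t
  · rw [hf.prod_eq]
    positivity
  · exact le_sup' (fun a => expostU v x p i s (update t i a)) (mem_univ a)

lemma IsUniform.interimValue_comp_perm (hf : IsUniform f) (π : ∀ j, Equiv.Perm (T j))
    (i : Fin n) (s a : T i) :
    interimValue f v (fun t => x fun j => π j (t j)) i s a = interimValue f v x i s (π i a) := by
  simp only [interimValue, hf.prod_eq, ← mul_sum]
  congr! 3 with o
  conv_rhs => rw [← Equiv.sum_comp (Equiv.piCongrRight π)]
  simp only [apply_update (fun j => ⇑(π j))]
  rfl

lemma IsUniform.Wel_eq (hf : IsUniform f) [∀ i, Nonempty (T i)] (x : (∀ i, T i) → O → ℝ) :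
    Wel f v x = ∑ i, (Fintype.card (T i) : ℝ)⁻¹ * ∑ s, interimValue f v x i s s := by
  have h : ∀ i, ∑ s, interimValue f v x i s s
      = Fintype.card (T i) * ∑ t, (∏ j, f j (t j)) * ∑ o, x t o * v i (t i) o := by
    intro i
    rw [← hf.sum_sum_prod_mul_update i fun t => ∑ o, x t o * v i (t i) o]
    simp only [interimValue, update_self, sum_mul, mul_sum, mul_assoc]
    exact sum_congr rfl fun s _ => sum_comm
  simp only [Wel, h, mul_sum]
  rw [sum_comm]
  field_simp

end Mechanism

end Stmt18

open Stmt18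

theorem ML_based_AMD_general
    {n : ℕ} {T : Fin n → Type} {O : Type}
    [∀ i, Fintype (T i)] [∀ i, Nonempty (T i)] [Fintype O]
    (f : ∀ i, T i → ℝ)
    -- each f i is the uniform distribution on T i
    (hfu : ∀ i (t : T i), f i t = 1 / (Fintype.card (T i) : ℝ))
    (v : (i : Fin n) → T i → O → ℝ) (hv : ∀ i t o, 0 ≤ v i t o)
    (lam : ℝ) (hlam0 : 0 ≤ lam) (hlam1 : lam ≤ 1)
    (ε : ℝ) (V : ℝ)
    (x : (∀ i, T i) → O → ℝ) (p : Fin n → (∀ i, T i) → ℝ)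
    (hx0 : ∀ t o, 0 ≤ x t o) (hx1 : ∀ t, ∑ o, x t o = 1)
    -- M is ε-EEIC
    (hEEIC : ∀ i : Fin n,
      ∑ t : ∀ j, T j, (∏ j, f j (t j)) *
        ((Finset.univ.sup' Finset.univ_nonempty fun s' : T i =>
            expostU v x p i (t i) (Function.update t i s'))
          - expostU v x p i (t i) t) ≤ ε)
    -- M is interim IR
    (hIR : ∀ (i : Fin n) (s : T i), 0 ≤ interimU f v x p i s s)
    -- μ_λ(M) ≥ V − ε
    (hmu : (1 - lam) * Rev f p + lam * Wel f v x ≥ V - ε) :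
    ∃ (x' : (∀ i, T i) → O → ℝ) (p' : Fin n → (∀ i, T i) → ℝ),
      (∀ t o, 0 ≤ x' t o) ∧ (∀ t, ∑ o, x' t o = 1) ∧ (∀ i t, 0 ≤ p' i t) ∧
      (∀ (i : Fin n) (s s' : T i),
        interimU f v x' p' i s s ≥ interimU f v x' p' i s s') ∧
      (∀ (i : Fin n) (s : T i), 0 ≤ interimU f v x' p' i s s) ∧
      (1 - lam) * Rev f p' + lam * Wel f v x'
        ≥ V - (1 - lam) * (∑ i, (Fintype.card (T i) : ℝ)) * ε - ε := by
  classical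
  have hf : IsUniform f := hfu
  set regret : ∀ i, T i → ℝ := fun i s =>
    univ.sup' univ_nonempty (fun a => interimU f v x p i s a) - interimU f v x p i s s
  choose π Q hQ0 hIC hQIR hWel hRev using fun i =>
    exists_perm_incentiveCompatible_prices (interimValue f v x i) (interimPayment f p i) (regret i)
      (interimValue_nonneg hf.nonneg hv hx0 i)
      (fun s a => by
        simp only [regret, ← interimU_eq_sub]
        linarith [le_sup' (fun a => interimU f v x p i s a) (mem_univ a)])
      (fun s => sub_nonneg.1 (hIR i s))
  refine ⟨fun t => x fun j => π j (t j), fun i t => Q i (t i), fun t o => hx0 _ o, fun t => hx1 _,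
    fun i t => hQ0 i (t i), fun i s a => ?_, fun i s => ?_, ?_⟩
  · simpa only [interimU_eq_sub, hf.interimValue_comp_perm, hf.interimPayment_ownType]
      using hIC i s a
  · simpa only [interimU_eq_sub, hf.interimValue_comp_perm, hf.interimPayment_ownType]
      using sub_nonneg.2 (hQIR i s)
  have hregret : ∀ i, ∑ s, regret i s ≤ Fintype.card (T i) * ε := fun i =>
    (hf.sum_interimRegret_le i).trans (by gcongr; exact hEEIC i)
  have hR := hf.Rev_le_add (p := p) (p' := fun i t => Q i (t i))
    (δ := fun i => Fintype.card (T i) * ε) fun i => by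
      simp only [hf.interimPayment_ownType]
      linarith [hRev i,
        mul_le_mul_of_nonneg_left (hregret i) (Nat.cast_nonneg (Fintype.card (T i)))]
  have hW : Wel f v x ≤ Wel f v fun t => x fun j => π j (t j) := by
    rw [hf.Wel_eq, hf.Wel_eq]
    exact sum_le_sum fun i _ => mul_le_mul_of_nonneg_left
      (by simpa only [hf.interimValue_comp_perm] using hWel i) (by positivity)
  rw [← sum_mul] at hR
  linarith [mul_le_mul_of_nonneg_left hR (sub_nonneg.2 hlam1), mul_le_mul_of_nonneg_left hW hlam0]

/-- Machine-learning based automated mechanism design: for independent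
uniform type distributions, if an `ε`-EEIC and interim IR mechanism `M` achieves the
blended objective `μ_λ(M) ≥ V − ε`, then there is a BIC and interim IR mechanism `M'`
with `μ_λ(M') ≥ V − (1−λ)·(∑ i |T i|)·ε − ε`. -/
theorem ML_based_AMD
    {n : ℕ} {T : Fin n → Type} {O : Type}
    [∀ i, Fintype (T i)] [∀ i, Nonempty (T i)] [Fintype O]
    (f : ∀ i, T i → ℝ)
    -- each f i is the uniform distribution on T i
    (hfu : ∀ i (t : T i), f i t = 1 / (Fintype.card (T i) : ℝ))
    (v : (i : Fin n) → T i → O → ℝ) (hv : ∀ i t o, 0 ≤ v i t o)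
    (lam : ℝ) (hlam0 : 0 ≤ lam) (hlam1 : lam ≤ 1)
    (ε : ℝ) (hε : 0 ≤ ε) (V : ℝ)
    (x : (∀ i, T i) → O → ℝ) (p : Fin n → (∀ i, T i) → ℝ)
    (hx0 : ∀ t o, 0 ≤ x t o) (hx1 : ∀ t, ∑ o, x t o = 1)
    (hp : ∀ i t, 0 ≤ p i t)
    -- M is ε-EEIC
    (hEEIC : ∀ i : Fin n,
      ∑ t : ∀ j, T j, (∏ j, f j (t j)) *
        ((Finset.univ.sup' Finset.univ_nonempty fun s' : T i =>
            expostU v x p i (t i) (Function.update t i s'))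
          - expostU v x p i (t i) t) ≤ ε)
    -- M is interim IR
    (hIR : ∀ (i : Fin n) (s : T i), 0 ≤ interimU f v x p i s s)
    -- μ_λ(M) ≥ V − ε
    (hmu : (1 - lam) * Rev f p + lam * Wel f v x ≥ V - ε) :
    ∃ (x' : (∀ i, T i) → O → ℝ) (p' : Fin n → (∀ i, T i) → ℝ),
      (∀ t o, 0 ≤ x' t o) ∧ (∀ t, ∑ o, x' t o = 1) ∧ (∀ i t, 0 ≤ p' i t) ∧
      (∀ (i : Fin n) (s s' : T i),
        interimU f v x' p' i s s ≥ interimU f v x' p' i s s') ∧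
      (∀ (i : Fin n) (s : T i), 0 ≤ interimU f v x' p' i s s) ∧
      (1 - lam) * Rev f p' + lam * Wel f v x'
        ≥ V - (1 - lam) * (∑ i, (Fintype.card (T i) : ℝ)) * ε - ε :=
  ML_based_AMD_general f hfu v hv lam hlam0 hlam1 ε V x p hx0 hx1 hEEIC hIR hmu
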